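/- Let g be 2π-periodic and α-Hölder (α ∈ (0,1)) and u(re^{iφ}) = (1-r²)/(2π) ∫_{-π}^{π} g(τ)/(1 + r² - 2r cos(τ-φ)) dτ for r > 1. Then for every r > 1 and φ₁, φ₂ with |φ₁-φ₂| ≤ π, |u(re^{iφ₁}) - u(re^{iφ₂})| ≤ C [g]_{0,α} |re^{iφ₁} - re^{iφ₂}|^α. -/

import Mathlib

/-!
After the substitution `τ ↦ τ + φ`, which periodicity allows, the difference of the two Poisson
integrals is the integral of `g (τ + φ₁) - g (τ + φ₂)` against the exterior Poisson kernel
`(r ^ 2 - 1) / (1 + r ^ 2 - 2 r cos τ)`. That kernel is positive with mean `1` (the interior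
Poisson kernel at `1 / r`, rescaled), so the difference is at most `Cg |φ₁ - φ₂| ^ α`. Finally,
for `|φ₁ - φ₂| ≤ π` Jordan's inequality bounds the angle by `π / 2` times the chord
`|r e^{iφ₁} - r e^{iφ₂}|` once `r ≥ 1`.
-/

open Real MeasureTheory InnerProductSpace

lemma continuous_of_abs_sub_le_mul_rpow {g : ℝ → ℝ} {C α : ℝ} (hα : 0 < α)
    (hg : ∀ x y, |g x - g y| ≤ C * |x - y| ^ α) : Continuous g := by
  refine continuous_iff_continuousAt.2 fun x ↦ tendsto_iff_norm_sub_tendsto_zero.2 ?_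
  refine squeeze_zero (fun _ ↦ norm_nonneg _) (fun y ↦ hg y x) ?_
  have : Continuous fun y ↦ C * |y - x| ^ α := by fun_prop (disch := exact hα.le)
  simpa [zero_rpow hα.ne'] using this.tendsto x

lemma Function.Periodic.intervalIntegral_comp_add_right {E : Type*} [NormedAddCommGroup E]
    [NormedSpace ℝ E] {f : ℝ → E} {T : ℝ} (hf : Function.Periodic f T) (t c : ℝ) :
    ∫ x in t..t + T, f (x + c) = ∫ x in t..t + T, f x := by
  rw [intervalIntegral.integral_comp_add_right, add_right_comm]
  exact hf.intervalIntegral_add_eq (t + c) t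

lemma abs_le_pi_div_two_mul_norm_exp_I_mul_ofReal_sub_one {x : ℝ} (hx : |x| ≤ π) :
    |x| ≤ π / 2 * ‖Complex.exp (Complex.I * x) - 1‖ := by
  have hsin : |sin (x / 2)| = |sin (|x| / 2)| := by rw [abs_sin_half, abs_sin_half, cos_abs]
  have hjordan : 2 / π * (|x| / 2) ≤ sin (|x| / 2) := mul_le_sin (by positivity) (by linarith)
  rw [Complex.norm_exp_I_mul_ofReal_sub_one, norm_mul, Real.norm_eq_abs, Real.norm_eq_abs, hsin,
    abs_two]
  calc |x| = π / 2 * (2 * (2 / π * (|x| / 2))) := by field_simp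
    _ ≤ π / 2 * (2 * |sin (|x| / 2)|) := by gcongr; exact hjordan.trans (le_abs_self _)

lemma norm_ofReal_mul_exp_sub_ofReal_mul_exp (r φ₁ φ₂ : ℝ) :
    ‖(r : ℂ) * Complex.exp (φ₁ * Complex.I) - (r : ℂ) * Complex.exp (φ₂ * Complex.I)‖
      = |r| * ‖Complex.exp (Complex.I * ↑(φ₁ - φ₂)) - 1‖ := by
  have hrot : Complex.exp (φ₁ * Complex.I)
      = Complex.exp (Complex.I * ↑(φ₁ - φ₂)) * Complex.exp (φ₂ * Complex.I) := by
    rw [← Complex.exp_add]; push_cast; congr 1; ring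
  rw [hrot, ← mul_sub, ← sub_one_mul]
  simp [Complex.norm_exp_ofReal_mul_I]

lemma abs_sub_le_pi_div_two_mul_norm_sub {r φ₁ φ₂ : ℝ} (hr : 1 ≤ r) (hφ : |φ₁ - φ₂| ≤ π) :
    |φ₁ - φ₂| ≤ π / 2 *
      ‖(r : ℂ) * Complex.exp (φ₁ * Complex.I) - (r : ℂ) * Complex.exp (φ₂ * Complex.I)‖ := by
  rw [norm_ofReal_mul_exp_sub_ofReal_mul_exp, abs_of_pos (by linarith : 0 < r)]
  refine (abs_le_pi_div_two_mul_norm_exp_I_mul_ofReal_sub_one hφ).trans ?_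
  gcongr
  exact le_mul_of_one_le_left (norm_nonneg _) hr

lemma norm_exp_mul_I_sub_ofReal_sq (ρ θ : ℝ) :
    ‖Complex.exp (θ * Complex.I) - ρ‖ ^ 2 = 1 + ρ ^ 2 - 2 * ρ * cos θ := by
  rw [← Complex.normSq_eq_norm_sq, Complex.normSq_apply]
  simp only [Complex.sub_re, Complex.sub_im, Complex.exp_ofReal_mul_I_re,
    Complex.exp_ofReal_mul_I_im, Complex.ofReal_re, Complex.ofReal_im]
  nlinarith [sin_sq_add_cos_sq θ]

lemma one_add_sq_sub_two_mul_cos_pos {r : ℝ} (hr : |r| ≠ 1) (τ : ℝ) :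
    0 < 1 + r ^ 2 - 2 * r * cos τ := by
  have hcos : r * cos τ ≤ |r| := (le_abs_self _).trans <| by
    rw [abs_mul]; exact mul_le_of_le_one_right (abs_nonneg r) (abs_cos_le_one τ)
  nlinarith [sq_pos_of_ne_zero (sub_ne_zero.2 hr), sq_abs r]

lemma integral_one_div_one_add_sq_sub_two_mul_cos_of_abs_lt_one {ρ : ℝ} (hρ : |ρ| < 1) :
    ∫ τ in (-π)..π, 1 / (1 + ρ ^ 2 - 2 * ρ * cos τ) = 2 * π / (1 - ρ ^ 2) := by
  have hmass := HarmonicContOnCl.circleAverage_poissonKernel_smul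
    (harmonicContOnCl_const (c := (1 : ℝ)) (s := Metric.ball (0 : ℂ) 1))
    (w := (ρ : ℂ)) (by simpa [Metric.mem_ball] using hρ)
  have hkernel : ∀ θ, (poissonKernel 0 ρ • fun _ : ℂ ↦ (1 : ℝ)) (circleMap 0 1 θ)
      = (1 - ρ ^ 2) * (1 / (1 + ρ ^ 2 - 2 * ρ * cos θ)) := by
    intro θ
    simp [poissonKernel_def, circleMap, norm_exp_mul_I_sub_ofReal_sq, div_eq_mul_inv]
  have hper : Function.Periodic (fun τ ↦ 1 / (1 + ρ ^ 2 - 2 * ρ * cos τ)) (2 * π) := by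
    intro τ; simp
  have hshift := hper.intervalIntegral_add_eq (-π) 0
  rw [show -π + 2 * π = π by ring, zero_add] at hshift
  rw [circleAverage_def] at hmass
  simp only [hkernel, intervalIntegral.integral_const_mul, smul_eq_mul] at hmass
  have hρ2 : 0 < 1 - ρ ^ 2 := by nlinarith [abs_nonneg ρ, sq_abs ρ]
  rw [hshift, eq_div_iff hρ2.ne']
  have := pi_pos
  field_simp at hmass
  linarith

lemma integral_one_div_one_add_sq_sub_two_mul_cos_of_one_lt_abs {r : ℝ} (hr : 1 < |r|) :
    ∫ τ in (-π)..π, 1 / (1 + r ^ 2 - 2 * r * cos τ) = 2 * π / (r ^ 2 - 1) := by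
  have hr0 : r ≠ 0 := abs_pos.1 (by linarith)
  have hρ : |r⁻¹| < 1 := by rw [abs_inv]; exact inv_lt_one_of_one_lt₀ hr
  have hrescale : ∀ τ, 1 / (1 + r ^ 2 - 2 * r * cos τ)
      = r⁻¹ ^ 2 * (1 / (1 + r⁻¹ ^ 2 - 2 * r⁻¹ * cos τ)) := by
    intro τ
    have := one_add_sq_sub_two_mul_cos_pos hr.ne' τ
    have := one_add_sq_sub_two_mul_cos_pos hρ.ne τ
    field_simp
    ring
  simp only [hrescale, intervalIntegral.integral_const_mul,
    integral_one_div_one_add_sq_sub_two_mul_cos_of_abs_lt_one hρ]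
  have : r ^ 2 - 1 ≠ 0 := by nlinarith [sq_abs r]
  field_simp

/-- `exteriorPoissonIntegral g r φ` is the paper's `u(r e^{iφ})`. -/
noncomputable def exteriorPoissonIntegral (g : ℝ → ℝ) (r φ : ℝ) : ℝ :=
  (1 - r ^ 2) / (2 * π) * ∫ τ in (-π)..π, g τ / (1 + r ^ 2 - 2 * r * cos (τ - φ))

lemma exteriorPoissonIntegral_eq_integral_comp_add {g : ℝ → ℝ}
    (hg : Function.Periodic g (2 * π)) (r φ : ℝ) :
    exteriorPoissonIntegral g r φ
      = (1 - r ^ 2) / (2 * π) * ∫ τ in (-π)..π, g (τ + φ) / (1 + r ^ 2 - 2 * r * cos τ) := by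
  have hper : Function.Periodic (fun τ ↦ g τ / (1 + r ^ 2 - 2 * r * cos (τ - φ))) (2 * π) := by
    intro τ
    dsimp only
    rw [hg τ, show τ + 2 * π - φ = τ - φ + 2 * π by ring, cos_add_two_pi]
  have hshift := hper.intervalIntegral_comp_add_right (-π) φ
  simp only [add_sub_cancel_right, show -π + 2 * π = π by ring] at hshift
  rw [exteriorPoissonIntegral, hshift]

lemma abs_exteriorPoissonIntegral_sub_le {g : ℝ → ℝ} (hgc : Continuous g)
    (hg : Function.Periodic g (2 * π)) {r : ℝ} (hr : 1 < r) {φ₁ φ₂ M : ℝ}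
    (hM : ∀ τ, |g (τ + φ₁) - g (τ + φ₂)| ≤ M) :
    |exteriorPoissonIntegral g r φ₁ - exteriorPoissonIntegral g r φ₂| ≤ M := by
  have hr' : 1 < |r| := by rwa [abs_of_pos (by linarith)]
  have hD : ∀ τ, 0 < 1 + r ^ 2 - 2 * r * cos τ := one_add_sq_sub_two_mul_cos_pos hr'.ne'
  have hint : ∀ f : ℝ → ℝ, Continuous f →
      IntervalIntegrable (fun τ ↦ f τ / (1 + r ^ 2 - 2 * r * cos τ)) volume (-π) π :=
    fun f hf ↦ (hf.div (by fun_prop) fun τ ↦ (hD τ).ne').intervalIntegrable _ _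
  have hbound : |∫ τ in (-π)..π, (g (τ + φ₁) - g (τ + φ₂)) / (1 + r ^ 2 - 2 * r * cos τ)|
      ≤ M * (2 * π / (r ^ 2 - 1)) := by
    rw [← integral_one_div_one_add_sq_sub_two_mul_cos_of_one_lt_abs hr',
      ← intervalIntegral.integral_const_mul, ← Real.norm_eq_abs]
    refine intervalIntegral.norm_integral_le_of_norm_le (by linarith [pi_pos])
      (Filter.Eventually.of_forall fun τ _ ↦ ?_) ((hint 1 continuous_const).const_mul M)
    rw [Real.norm_eq_abs, abs_div, abs_of_pos (hD τ), mul_one_div]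
    exact div_le_div_of_nonneg_right (hM τ) (hD τ).le
  have hr2 : 0 < r ^ 2 - 1 := by nlinarith
  rw [exteriorPoissonIntegral_eq_integral_comp_add hg,
    exteriorPoissonIntegral_eq_integral_comp_add hg, ← mul_sub,
    ← intervalIntegral.integral_sub (hint _ (by fun_prop)) (hint _ (by fun_prop)), abs_mul]
  simp only [← sub_div]
  calc |(1 - r ^ 2) / (2 * π)| * |∫ τ in (-π)..π,
        (g (τ + φ₁) - g (τ + φ₂)) / (1 + r ^ 2 - 2 * r * cos τ)|
      ≤ (r ^ 2 - 1) / (2 * π) * (M * (2 * π / (r ^ 2 - 1))) := by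
        rw [abs_div, abs_sub_comm, abs_of_pos hr2, abs_of_pos (by positivity)]
        gcongr
    _ = M := by field_simp

theorem exterior_poisson_angular_holder (α : ℝ) (hα : α ∈ Set.Ioo (0 : ℝ) 1) :
    ∃ C > 0, ∀ (g : ℝ → ℝ) (Cg : ℝ),
      (∀ x, g (x + 2 * π) = g x) →
      (∀ x y, |g x - g y| ≤ Cg * |x - y| ^ α) →
      ∀ r φ₁ φ₂ : ℝ, 1 < r → |φ₁ - φ₂| ≤ π →
        |((1 - r ^ 2) / (2 * π) * ∫ τ in (-π)..π,
            g τ / (1 + r ^ 2 - 2 * r * Real.cos (τ - φ₁)))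
          - (1 - r ^ 2) / (2 * π) * ∫ τ in (-π)..π,
            g τ / (1 + r ^ 2 - 2 * r * Real.cos (τ - φ₂))|
          ≤ C * Cg
            * ‖(r : ℂ) * Complex.exp (φ₁ * Complex.I)
                - (r : ℂ) * Complex.exp (φ₂ * Complex.I)‖ ^ α := by
  refine ⟨(π / 2) ^ α, by positivity, fun g Cg hper hg r φ₁ φ₂ hr hφ ↦ ?_⟩
  have hCg : 0 ≤ Cg := by simpa using (abs_nonneg _).trans (hg 0 1)
  calc |exteriorPoissonIntegral g r φ₁ - exteriorPoissonIntegral g r φ₂|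
      ≤ Cg * |φ₁ - φ₂| ^ α :=
        abs_exteriorPoissonIntegral_sub_le (continuous_of_abs_sub_le_mul_rpow hα.1 hg) hper hr
          fun τ ↦ by simpa using hg (τ + φ₁) (τ + φ₂)
    _ ≤ Cg * (π / 2 * ‖(r : ℂ) * Complex.exp (φ₁ * Complex.I)
          - (r : ℂ) * Complex.exp (φ₂ * Complex.I)‖) ^ α := by
        gcongr
        · exact hα.1.le
        · exact abs_sub_le_pi_div_two_mul_norm_sub hr.le hφ
    _ = _ := by rw [mul_rpow (by positivity) (norm_nonneg _)]; ring
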